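/- arXiv:1612.03718 — 3 statements merged into one kernel-verified Lean document; each statement's English description precedes it below -/
import Mathlib

section
/- Let (G, K) be a compact Gelfand pair with normalized Haar measure ω_G on G. If φ and ψ are two distinct spherical functions for (G, K), then ∫_G φ(x) conj(ψ(x)) dω_G(x) = 0. -/
open MeasureTheory

/-- `f : G → ℂ` is bi-invariant with respect to the subgroup `K`. -/
def BiInvariant {G : Type*} [Group G] (K : Subgroup G) (f : G → ℂ) : Prop :=
  ∀ (x : G) (k l : K), f ((k : G) * x * (l : G)) = f x

/-- Convolution of two functions on a group with respect to a measure. -/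
noncomputable def conv {G : Type*} [Group G] [MeasurableSpace G]
    (ωG : Measure G) (f g : G → ℂ) : G → ℂ :=
  fun x => ∫ y, f y * g (y⁻¹ * x) ∂ωG

/-- `φ` is a spherical function for the pair `(G, K)` with respect to the
normalized Haar measure `ωK` on `K`. -/
def IsSpherical {G : Type*} [Group G] [TopologicalSpace G]
    (K : Subgroup G) [MeasurableSpace K] (ωK : Measure K) (φ : G → ℂ) : Prop :=
  Continuous φ ∧ φ 1 = 1 ∧
    ∀ x y : G, ∫ k : K, φ (x * (k : G) * y) ∂ωK = φ x * φ y

/-!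
Averaging over `K` and using the functional equation of `χ` shows that the convolution of two
spherical functions is `(φ ⋆ χ) x = c · χ x` with `c = (φ ⋆ χ) 1 = ∫ φ y χ y⁻¹`; the symmetry
`(φ ⋆ χ) x = (χ̌ ⋆ φ̌) x⁻¹`, where `f̌ y = f y⁻¹`, turns this into `(φ ⋆ χ) x = c · φ x`. So `c ≠ 0`
forces `φ = χ`. For `φ̌` and `conj φ` the constant is `∫ |φ|² > 0`, whence `φ x⁻¹ = conj (φ x)`,
and the pairing `∫ φ · conj ψ` is the constant `c` of `φ` and `ψ`, which vanishes when `φ ≠ ψ`.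
-/

namespace MeasureTheory.Measure

variable {G : Type*} [Group G] [TopologicalSpace G] [IsTopologicalGroup G] [LocallyCompactSpace G]
  [MeasurableSpace G] [BorelSpace G] {μ : Measure G} [μ.IsHaarMeasure] [IsProbabilityMeasure μ]

instance isMulRightInvariant_of_isProbabilityMeasure : μ.IsMulRightInvariant where
  map_mul_right_eq_self g :=
    have : IsProbabilityMeasure (μ.map (· * g)) :=
      isProbabilityMeasure_map (measurable_mul_const g).aemeasurable
    isHaarMeasure_eq_of_isProbabilityMeasure _ μ

instance isInvInvariant_of_isProbabilityMeasure : μ.IsInvInvariant where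
  inv_eq_self :=
    have : μ.inv.IsHaarMeasure := ⟨⟩
    have : IsProbabilityMeasure μ.inv := isProbabilityMeasure_map measurable_inv.aemeasurable
    isHaarMeasure_eq_of_isProbabilityMeasure _ μ

end MeasureTheory.Measure

namespace IsSpherical

variable {G : Type*} [Group G] [TopologicalSpace G] {K : Subgroup G} [MeasurableSpace K]
  {ωK : Measure K} {φ : G → ℂ}

theorem continuous (hφ : IsSpherical K ωK φ) : Continuous φ := hφ.1

theorem map_one (hφ : IsSpherical K ωK φ) : φ 1 = 1 := hφ.2.1

theorem integral_mul_coe_mul (hφ : IsSpherical K ωK φ) (x y : G) :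
    ∫ k : K, φ (x * k * y) ∂ωK = φ x * φ y :=
  hφ.2.2 x y

theorem apply_mul_coe [MeasurableMul K] [ωK.IsMulLeftInvariant] (hφ : IsSpherical K ωK φ)
    (x : G) (l : K) : φ (x * l) = φ x := by
  have h : φ (x * l) * φ 1 = φ x * φ 1 := by
    rw [← hφ.integral_mul_coe_mul, ← hφ.integral_mul_coe_mul]
    simpa only [Subgroup.coe_mul, mul_assoc] using
      integral_mul_left_eq_self (μ := ωK) (fun k : K => φ (x * k * 1)) l
  simpa [hφ.map_one] using h

theorem apply_coe_mul [MeasurableMul K] [ωK.IsMulRightInvariant] (hφ : IsSpherical K ωK φ)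
    (l : K) (x : G) : φ (l * x) = φ x := by
  have h : φ 1 * φ (l * x) = φ 1 * φ x := by
    rw [← hφ.integral_mul_coe_mul, ← hφ.integral_mul_coe_mul]
    simpa only [Subgroup.coe_mul, mul_assoc] using
      integral_mul_right_eq_self (μ := ωK) (fun k : K => φ (1 * k * x)) l
  simpa [hφ.map_one] using h

theorem conj (hφ : IsSpherical K ωK φ) : IsSpherical K ωK (fun x => starRingEnd ℂ (φ x)) :=
  ⟨Complex.continuous_conj.comp hφ.continuous, by simp [hφ.map_one], fun x y => by
    rw [integral_conj, hφ.integral_mul_coe_mul, map_mul]⟩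

theorem comp_inv [ContinuousInv G] [MeasurableInv K] [ωK.IsInvInvariant]
    (hφ : IsSpherical K ωK φ) : IsSpherical K ωK (fun x => φ x⁻¹) := by
  refine ⟨hφ.continuous.comp continuous_inv, by simpa using hφ.map_one, fun x y => ?_⟩
  have h : ∀ k : K, (x * k * y)⁻¹ = y⁻¹ * ((k⁻¹ : K) : G) * x⁻¹ := fun k => by
    push_cast; group
  simp_rw [h]
  rw [integral_inv_eq_self (fun k : K => φ (y⁻¹ * k * x⁻¹)), hφ.integral_mul_coe_mul, mul_comm]

end IsSpherical

section Convolution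

variable {G : Type*} [Group G] [MeasurableSpace G] [MeasurableMul G] (ωG : Measure G)
  [ωG.IsMulLeftInvariant]

theorem conv_mul_apply_of_forall_apply_mul {f : G → ℂ} (g : G) (hf : ∀ y, f (g * y) = f y)
    (h : G → ℂ) (x : G) : conv ωG f h (g * x) = conv ωG f h x := by
  rw [conv, ← integral_mul_left_eq_self _ g]
  simp only [hf, mul_inv_rev, mul_assoc, inv_mul_cancel_left, conv]

theorem conv_comp_inv_apply_inv (f h : G → ℂ) (x : G) :
    conv ωG (fun y => h y⁻¹) (fun y => f y⁻¹) x⁻¹ = conv ωG f h x := by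
  rw [conv, ← integral_mul_left_eq_self _ x⁻¹]
  simp only [conv, mul_inv_rev, inv_inv, mul_inv_cancel_left, mul_comm]

end Convolution

section SphericalConvolution

variable {G : Type*} [Group G] [TopologicalSpace G] [IsTopologicalGroup G] [CompactSpace G]
  [MeasurableSpace G] [BorelSpace G] (ωG : Measure G) [ωG.IsMulLeftInvariant]
  [IsFiniteMeasureOnCompacts ωG]
  {K : Subgroup G} [CompactSpace K] [MeasurableSpace K] [BorelSpace K] {ωK : Measure K}
  [IsProbabilityMeasure ωK]

theorem conv_apply_eq_conv_one_mul {f χ : G → ℂ} (hf : Continuous f)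
    (hfK : ∀ (k : K) y, f (k * y) = f y) (hχ : IsSpherical K ωK χ) (x : G) :
    conv ωG f χ x = conv ωG f χ 1 * χ x :=
  calc conv ωG f χ x = ∫ k : K, conv ωG f χ (k * x) ∂ωK := by
        simp [conv_mul_apply_of_forall_apply_mul ωG _ (hfK _)]
    _ = ∫ y, ∫ k : K, f y * χ (y⁻¹ * k * x) ∂ωK ∂ωG := by
        simp only [conv, mul_assoc]
        have := hχ.continuous
        exact integral_integral_swap_of_hasCompactSupport (by fun_prop)
          (.of_compactSpace _)
    _ = ∫ y, f y * χ y⁻¹ * χ x ∂ωG := by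
        simp_rw [integral_const_mul, hχ.integral_mul_coe_mul, mul_assoc]
    _ = conv ωG f χ 1 * χ x := by
        simp only [integral_mul_const, conv, mul_one]

namespace IsSpherical

variable [ωK.IsMulLeftInvariant] [ωK.IsInvInvariant] {φ χ : G → ℂ}

theorem conv_apply_eq_conv_one_mul_left (hφ : IsSpherical K ωK φ) (hχ : IsSpherical K ωK χ)
    (x : G) : conv ωG φ χ x = conv ωG φ χ 1 * φ x := by
  have hχK : ∀ (k : K) y, χ (k * y)⁻¹ = χ y⁻¹ := fun k y => by
    rw [mul_inv_rev, ← Subgroup.coe_inv, hχ.apply_mul_coe]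
  have h1 := conv_comp_inv_apply_inv ωG φ χ 1
  rw [inv_one] at h1
  rw [← conv_comp_inv_apply_inv, conv_apply_eq_conv_one_mul ωG (f := fun y => χ y⁻¹)
    (hχ.continuous.comp continuous_inv) hχK hφ.comp_inv, h1, inv_inv]

theorem eq_of_conv_one_ne_zero [ωK.IsMulRightInvariant] (hφ : IsSpherical K ωK φ)
    (hχ : IsSpherical K ωK χ) (h : conv ωG φ χ 1 ≠ 0) : φ = χ :=
  funext fun x => mul_left_cancel₀ h <|
    (hφ.conv_apply_eq_conv_one_mul_left ωG hχ x).symm.trans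
      (conv_apply_eq_conv_one_mul ωG hφ.continuous hφ.apply_coe_mul hχ x)

theorem apply_inv [ωK.IsMulRightInvariant] [ωG.IsOpenPosMeasure] (hφ : IsSpherical K ωK φ)
    (x : G) : φ x⁻¹ = starRingEnd ℂ (φ x) := by
  have hpos : 0 < ∫ y, Complex.normSq (φ y⁻¹) ∂ωG :=
    (Complex.continuous_normSq.comp (hφ.continuous.comp continuous_inv))
      |>.integral_pos_of_hasCompactSupport_nonneg_nonzero (x := 1) (.of_compactSpace _)
      (fun _ => Complex.normSq_nonneg _) (by simp [hφ.map_one])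
  have hconv : conv ωG (fun y => φ y⁻¹) (fun y => starRingEnd ℂ (φ y)) 1 ≠ 0 := by
    simp only [conv, mul_one, Complex.mul_conj]
    exact_mod_cast hpos.ne'
  exact congrFun (hφ.comp_inv.eq_of_conv_one_ne_zero ωG hφ.conj hconv) x

end IsSpherical

end SphericalConvolution

theorem stmt_3_general {G : Type*} [Group G] [TopologicalSpace G] [IsTopologicalGroup G]
    [CompactSpace G] [MeasurableSpace G] [BorelSpace G]
    (ωG : Measure G) [ωG.IsHaarMeasure]
    (K : Subgroup G) [CompactSpace K] [MeasurableSpace K] [BorelSpace K]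
    (ωK : Measure K) [ωK.IsHaarMeasure] [IsProbabilityMeasure ωK]
    (φ ψ : G → ℂ) (hφ : IsSpherical K ωK φ) (hψ : IsSpherical K ωK ψ)
    (hne : φ ≠ ψ) :
    ∫ x, φ x * (starRingEnd ℂ) (ψ x) ∂ωG = 0 := by
  have hpairing : ∫ x, φ x * (starRingEnd ℂ) (ψ x) ∂ωG = conv ωG φ ψ 1 := by
    simp only [conv, mul_one, hψ.apply_inv ωG]
  rw [hpairing]
  by_contra h
  exact hne (hφ.eq_of_conv_one_ne_zero ωG hψ h)

theorem stmt_3 {G : Type*} [Group G] [TopologicalSpace G] [IsTopologicalGroup G]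
    [CompactSpace G] [MeasurableSpace G] [BorelSpace G]
    (ωG : Measure G) [ωG.IsHaarMeasure] [IsProbabilityMeasure ωG]
    (K : Subgroup G) [CompactSpace K] [MeasurableSpace K] [BorelSpace K]
    (ωK : Measure K) [ωK.IsHaarMeasure] [IsProbabilityMeasure ωK]
    -- Gelfand pair: the convolution algebra of continuous `K`-bi-invariant
    -- functions on `G` is commutative.
    (hGelfand : ∀ f g : G → ℂ, Continuous f → Continuous g →
      BiInvariant K f → BiInvariant K g → conv ωG f g = conv ωG g f)
    (φ ψ : G → ℂ) (hφ : IsSpherical K ωK φ) (hψ : IsSpherical K ωK ψ)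
    (hne : φ ≠ ψ) :
    ∫ x, φ x * (starRingEnd ℂ) (ψ x) ∂ωG = 0 :=
  stmt_3_general ωG K ωK φ ψ hφ hψ hne
end

section
/- Let G be a compact group with normalized Haar measure ω_G, L a locally compact group, and f : G × L → ℂ continuous and positive definite on the product group G × L. Then for every u, v ∈ L and every compactly supported complex Radon measure σ on L, ∫_G ∫_L ∫_L f(y, u⁻¹v) dω_G(y) dσ(u) d(conj σ)(v) ≥ 0. -/
/-!
Put `Φ y = ∫∫ f(y, u⁻¹v) dσ(u) d(conj σ)(v)`. For points `x_j ∈ G` and weights `d_j`, the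
function `w ↦ ∑ f(x_j⁻¹x_k, w) d_j conj d_k` on `L` is positive definite (apply positive
definiteness of `f` to the points `(x_j, u_a)`), and the double integral of a continuous positive
definite function against `σ ⊗ conj σ` is nonnegative; hence `Φ` is positive definite on `G`.
The same fact on `G` with `σ = ω_G`, together with left invariance, gives `∫ Φ dω_G ≥ 0`.

The double integral is nonnegative because it is a limit of the sums
`∑ g(c_j⁻¹ c_k) σ(A_j) conj σ(A_k)`, where the `A_j` partition the support of `σ` into pieces
of small left translates `c_j V`, and such sums are nonnegative by definition.
-/

open MeasureTheory ComplexOrder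

/-- A function on a group is positive definite if all finite Gram-type sums
are nonnegative. -/
def IsPosDefFn {G : Type*} [Group G] (f : G → ℂ) : Prop :=
  ∀ (n : ℕ) (x : Fin n → G) (c : Fin n → ℂ),
    0 ≤ ∑ j, ∑ k, f ((x j)⁻¹ * x k) * c j * (starRingEnd ℂ) (c k)

open Filter Topology Set ComplexConjugate
open scoped Pointwise

theorem IsPosDefFn.sum_nonneg {G ι : Type*} [Group G] {f : G → ℂ} (hf : IsPosDefFn f)
    (s : Finset ι) (x : ι → G) (c : ι → ℂ) :
    0 ≤ ∑ j ∈ s, ∑ k ∈ s, f ((x j)⁻¹ * x k) * c j * conj (c k) := by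
  calc 0 ≤ _ := hf s.card (fun j => x (s.equivFin.symm j)) (fun j => c (s.equivFin.symm j))
    _ = ∑ j : s, ∑ k : s, f ((x j)⁻¹ * x k) * c j * conj (c k) :=
        Fintype.sum_equiv s.equivFin.symm _ _ fun j =>
          Fintype.sum_equiv s.equivFin.symm _ _ fun k => rfl
    _ = _ := by
        rw [← Finset.sum_coe_sort s]
        exact Finset.sum_congr rfl fun j _ =>
          Finset.sum_coe_sort s fun k => f ((x j)⁻¹ * x k) * c j * conj (c k)

theorem IsPosDefFn.gramSum_fst {G L ι : Type*} [Group G] [Group L] [Fintype ι] {f : G × L → ℂ}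
    (hf : IsPosDefFn f) (x : ι → G) (d : ι → ℂ) :
    IsPosDefFn fun w => ∑ j, ∑ k, f ((x j)⁻¹ * x k, w) * d j * conj (d k) := by
  intro n u c
  refine (hf.sum_nonneg Finset.univ (fun p : ι × Fin n => (x p.1, u p.2))
    (fun p => d p.1 * c p.2)).trans_eq ?_
  simp only [Fintype.sum_prod_type, Finset.sum_mul, Prod.inv_mk, Prod.mk_mul_mk, map_mul]
  rw [Finset.sum_comm]
  refine Finset.sum_congr rfl fun a _ => ?_
  conv_rhs => rw [Finset.sum_comm]
  refine Finset.sum_congr rfl fun j _ => ?_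
  rw [Finset.sum_comm]
  refine Finset.sum_congr rfl fun b _ => Finset.sum_congr rfl fun k _ => ?_
  ring

namespace MeasureTheory.SimpleFunc

variable {X Y : Type*} [MeasurableSpace X] {μ : Measure X}

theorem exists_forall_mem_of_mem_biUnion [Nonempty Y] (V : Y → Set X)
    (hV : ∀ b, MeasurableSet (V b)) (t : Finset Y) :
    ∃ π : SimpleFunc X Y, ∀ x ∈ ⋃ b ∈ t, V b, π x ∈ t ∧ x ∈ V (π x) := by
  classical
  induction t using Finset.induction_on with
  | empty => exact ⟨const X (Classical.arbitrary Y), by simp⟩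
  | insert a t _ ih =>
    obtain ⟨π, hπ⟩ := ih
    refine ⟨piecewise (V a) (hV a) (const X a) π, fun x hx => ?_⟩
    by_cases hxa : x ∈ V a
    · simp [hxa]
    · have hxt : x ∈ ⋃ b ∈ t, V b := by simpa [hxa] using hx
      simpa [hxa] using ⟨Or.inr (hπ x hxt).1, (hπ x hxt).2⟩

theorem integrable_comp_mul (π : SimpleFunc X Y) (φ : Y → ℂ) {ψ : X → ℂ}
    (hψ : Integrable ψ μ) :
    Integrable (fun x => φ (π x) * ψ x) μ := by
  obtain ⟨B, hB⟩ := (π.map φ).exists_forall_norm_le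
  exact hψ.bdd_mul (π.map φ).aestronglyMeasurable (ae_of_all _ hB)

theorem integral_comp_mul (π : SimpleFunc X Y) (φ : Y → ℂ) {ψ : X → ℂ}
    (hψ : Integrable ψ μ) :
    ∫ x, φ (π x) * ψ x ∂μ = ∑ b ∈ π.range, φ b * ∫ x in π ⁻¹' {b}, ψ x ∂μ := by
  have hpt : ∀ x, φ (π x) * ψ x =
      ∑ b ∈ π.range, (π ⁻¹' {b}).indicator (fun y => φ b * ψ y) x := by
    intro x
    rw [Finset.sum_eq_single_of_mem (π x) (π.mem_range_self x) fun b _ hb =>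
      Set.indicator_of_notMem (s := π ⁻¹' {b}) (Ne.symm hb) (fun y => φ b * ψ y)]
    rw [Set.indicator_of_mem (s := π ⁻¹' {π x}) (mem_singleton (π x))]
  simp_rw [hpt]
  rw [integral_finsetSum _ fun b _ => (hψ.const_mul _).indicator (π.measurableSet_fiber b)]
  simp_rw [integral_indicator (π.measurableSet_fiber _), integral_const_mul]

end MeasureTheory.SimpleFunc

theorem IsPosDefFn.integral_integral_simpleFunc_nonneg {H X : Type*} [Group H] {g : H → ℂ}
    [MeasurableSpace X] {μ : Measure X} {h : X → ℂ} (hpd : IsPosDefFn g) (hh : Integrable h μ)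
    (π : SimpleFunc X H) :
    0 ≤ ∫ p, ∫ q, g ((π p)⁻¹ * π q) * h p * conj (h q) ∂μ ∂μ := by
  set γ : H → ℂ := fun a => ∫ x in π ⁻¹' {a}, h x ∂μ
  have hconj : Integrable (fun x => conj (h x)) μ :=
    Complex.conjCLE.toContinuousLinearMap.integrable_comp hh
  have inner : ∀ p, ∫ q, g ((π p)⁻¹ * π q) * h p * conj (h q) ∂μ =
      (∑ b ∈ π.range, g ((π p)⁻¹ * b) * conj (γ b)) * h p := by
    intro p
    simp only [mul_right_comm _ (h p), integral_mul_const]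
    rw [π.integral_comp_mul (fun b => g ((π p)⁻¹ * b)) hconj]
    simp only [γ, integral_conj]
  simp only [inner]
  rw [π.integral_comp_mul (fun a => ∑ b ∈ π.range, g (a⁻¹ * b) * conj (γ b)) hh]
  refine (hpd.sum_nonneg π.range (fun a => a) γ).trans_eq ?_
  simp only [Finset.sum_mul]
  refine Finset.sum_congr rfl fun a _ => Finset.sum_congr rfl fun b _ => ?_
  ring

theorem norm_integral_integral_sub_le {X E : Type*} [MeasurableSpace X] [NormedAddCommGroup E]
    [NormedSpace ℝ E] {μ : Measure X} [IsFiniteMeasure μ] {F F' : X → X → E}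
    (hF : ∀ p, Integrable (F p) μ) (hF' : ∀ p, Integrable (F' p) μ)
    (hIF : Integrable (fun p => ∫ q, F p q ∂μ) μ)
    (hIF' : Integrable (fun p => ∫ q, F' p q ∂μ) μ)
    {ε : ℝ} (hε : ∀ᵐ p ∂μ, ∀ᵐ q ∂μ, ‖F p q - F' p q‖ ≤ ε) :
    ‖∫ p, ∫ q, F p q ∂μ ∂μ - ∫ p, ∫ q, F' p q ∂μ ∂μ‖ ≤ ε * μ.real univ * μ.real univ := by
  rw [← integral_sub hIF hIF']
  refine norm_integral_le_of_norm_le_const ?_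
  filter_upwards [hε] with p hp
  rw [← integral_sub (hF p) (hF' p)]
  exact norm_integral_le_of_norm_le_const hp

section ParametricIntegral

variable {X Y : Type*} [TopologicalSpace X] [TopologicalSpace Y] [MeasurableSpace Y]
  [OpensMeasurableSpace Y] {μ : Measure Y} [IsFiniteMeasure μ] {C : Set Y}
  {w : Y → ℂ} {M : ℝ}

theorem Continuous.integrable_mul_of_ae_mem {k : Y → ℂ} (hk : Continuous k) (hC : IsCompact C)
    (hμC : ∀ᵐ y ∂μ, y ∈ C) (hw : AEStronglyMeasurable w μ) (hM : ∀ y, ‖w y‖ ≤ M) :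
    Integrable (fun y => k y * w y) μ := by
  obtain ⟨B, hB⟩ := hC.exists_bound_of_continuousOn hk.continuousOn
  exact (Integrable.of_bound hk.aestronglyMeasurable B (hμC.mono hB)).mul_bdd hw
    (ae_of_all _ hM)

theorem Continuous.continuous_integral_mul_of_ae_mem {k : X × Y → ℂ} (hk : Continuous k)
    (hC : IsCompact C) (hμC : ∀ᵐ y ∂μ, y ∈ C) (hw : AEStronglyMeasurable w μ)
    (hM : ∀ y, ‖w y‖ ≤ M) :
    Continuous fun x => ∫ y, k (x, y) * w y ∂μ := by
  refine continuous_iff_continuousAt.2 fun x₀ => Metric.tendsto_nhds.2 fun ε hε => ?_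
  obtain ⟨δ, hδ, hδε⟩ := exists_pos_mul_lt hε (M * μ.real univ)
  have hnear : ∀ᶠ x in 𝓝 x₀, ∀ y ∈ C, ‖k (x, y) - k (x₀, y)‖ < δ :=
    hC.eventually_forall_of_forall_eventually fun y _ =>
      (Continuous.continuousAt (by fun_prop)).eventually_lt continuousAt_const
        (by simpa using hδ)
  have hint : ∀ x, Integrable (fun y => k (x, y) * w y) μ := fun x =>
    (hk.comp (Continuous.prodMk_right x)).integrable_mul_of_ae_mem hC hμC hw hM
  filter_upwards [hnear] with x hx
  rw [dist_eq_norm, ← integral_sub (hint x) (hint x₀)]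
  refine (norm_integral_le_of_norm_le_const (C := δ * M) ?_).trans_lt (by linarith)
  filter_upwards [hμC] with y hy
  rw [← sub_mul, norm_mul]
  exact mul_le_mul (hx y hy).le (hM y) (norm_nonneg _) hδ.le

end ParametricIntegral

section IntegralForm

variable {H : Type*} [Group H] [MeasurableSpace H]

/-- `integralForm μ h g = ∫∫ g(u⁻¹v) dσ(u) d(conj σ)(v)` for the complex measure
`σ = h • μ`. -/
noncomputable def integralForm (μ : Measure H) (h g : H → ℂ) : ℂ :=
  ∫ u, ∫ v, g (u⁻¹ * v) * h u * conj (h v) ∂μ ∂μ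

theorem integralForm_eq (μ : Measure H) (h g : H → ℂ) :
    integralForm μ h g = ∫ u, (∫ v, g (u⁻¹ * v) * conj (h v) ∂μ) * h u ∂μ := by
  simp only [integralForm, mul_right_comm _ (h _), integral_mul_const]

theorem integralForm_mul_const (μ : Measure H) (h g : H → ℂ) (c : ℂ) :
    integralForm μ h (fun w => g w * c) = integralForm μ h g * c := by
  simp only [integralForm, mul_right_comm _ c, integral_mul_const]

variable [TopologicalSpace H] [IsTopologicalGroup H] [OpensMeasurableSpace H]
  {μ : Measure H} [IsFiniteMeasure μ] {C : Set H} {h g : H → ℂ} {M : ℝ}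

theorem Continuous.integrable_mul_mul_conj (hg : Continuous g) (hC : IsCompact C)
    (hμC : ∀ᵐ x ∂μ, x ∈ C) (hh : AEStronglyMeasurable h μ) (hM : ∀ u, ‖h u‖ ≤ M) (u : H) :
    Integrable (fun v => g (u⁻¹ * v) * h u * conj (h v)) μ :=
  ((hg.comp (continuous_const_mul u⁻¹)).mul continuous_const).integrable_mul_of_ae_mem hC hμC
    (Complex.continuous_conj.comp_aestronglyMeasurable hh) fun v => by simpa using hM v

theorem Continuous.integrable_integral_mul_mul_conj (hg : Continuous g) (hC : IsCompact C)
    (hμC : ∀ᵐ x ∂μ, x ∈ C) (hh : AEStronglyMeasurable h μ) (hM : ∀ u, ‖h u‖ ≤ M) :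
    Integrable (fun u => ∫ v, g (u⁻¹ * v) * h u * conj (h v) ∂μ) μ := by
  simp only [mul_right_comm _ (h _), integral_mul_const]
  have hk : Continuous fun z : H × H => g (z.1⁻¹ * z.2) := by fun_prop
  exact (hk.continuous_integral_mul_of_ae_mem hC hμC
    (Complex.continuous_conj.comp_aestronglyMeasurable hh) fun v => by simpa using hM v
    ).integrable_mul_of_ae_mem hC hμC hh hM

theorem integralForm_finsetSum {ι : Type*} (s : Finset ι) {φ : ι → H → ℂ}
    (hφ : ∀ i ∈ s, Continuous (φ i)) (hC : IsCompact C)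
    (hμC : ∀ᵐ x ∂μ, x ∈ C) (hh : AEStronglyMeasurable h μ) (hM : ∀ u, ‖h u‖ ≤ M) :
    integralForm μ h (fun w => ∑ i ∈ s, φ i w) = ∑ i ∈ s, integralForm μ h (φ i) := by
  simp only [integralForm, Finset.sum_mul]
  rw [← integral_finsetSum s fun i hi =>
    (hφ i hi).integrable_integral_mul_mul_conj hC hμC hh hM]
  congr 1 with u
  exact integral_finsetSum s fun i hi => (hφ i hi).integrable_mul_mul_conj hC hμC hh hM u

theorem Continuous.continuous_integralForm {X : Type*} [TopologicalSpace X] {k : X × H → ℂ}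
    (hk : Continuous k) (hC : IsCompact C)
    (hμC : ∀ᵐ x ∂μ, x ∈ C) (hh : AEStronglyMeasurable h μ) (hM : ∀ u, ‖h u‖ ≤ M) :
    Continuous fun x => integralForm μ h fun w => k (x, w) := by
  simp only [integralForm_eq]
  have hk' : Continuous fun z : (X × H) × H => k (z.1.1, z.1.2⁻¹ * z.2) := by fun_prop
  exact (hk'.continuous_integral_mul_of_ae_mem hC hμC
    (Complex.continuous_conj.comp_aestronglyMeasurable hh) fun v => by simpa using hM v
    ).continuous_integral_mul_of_ae_mem hC hμC hh hM

end IntegralForm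

section PosDef

variable {H : Type*} [Group H] [MeasurableSpace H] [TopologicalSpace H] [IsTopologicalGroup H]
  [OpensMeasurableSpace H] {g : H → ℂ}

theorem Continuous.exists_simpleFunc_norm_sub_lt (hg : Continuous g) {C : Set H}
    (hC : IsCompact C) {δ : ℝ} (hδ : 0 < δ) :
    ∃ π : SimpleFunc H H, ∀ p ∈ C, ∀ q ∈ C, ‖g (p⁻¹ * q) - g ((π p)⁻¹ * π q)‖ < δ := by
  have hnear : ∀ᶠ s : H × H in 𝓝 (1, 1), ∀ ab ∈ C ×ˢ C,
      ‖g ((ab.1 * s.1)⁻¹ * (ab.2 * s.2)) - g (ab.1⁻¹ * ab.2)‖ < δ :=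
    (hC.prod hC).eventually_forall_of_forall_eventually fun ab _ =>
      (Continuous.continuousAt (by fun_prop)).eventually_lt continuousAt_const (by simpa using hδ)
  rw [nhds_prod_eq] at hnear
  obtain ⟨U, hU, hUU⟩ := Filter.mem_prod_self_iff.1 hnear
  obtain ⟨V, hVU, hVo, hV1⟩ := mem_nhds_iff.1 hU
  obtain ⟨t, htC, hCt⟩ := hC.elim_nhds_subcover (fun b => b • V) fun b _ =>
    (hVo.smul b).mem_nhds ⟨1, hV1, mul_one b⟩
  obtain ⟨π, hπ⟩ := SimpleFunc.exists_forall_mem_of_mem_biUnion (fun b => b • V)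
    (fun b => (hVo.smul b).measurableSet) t
  refine ⟨π, fun p hp q hq => ?_⟩
  obtain ⟨hpt, s, hs, hps⟩ := hπ p (hCt hp)
  obtain ⟨hqt, s', hs', hqs⟩ := hπ q (hCt hq)
  have key := hUU (mk_mem_prod (hVU hs) (hVU hs')) (π p, π q) ⟨htC _ hpt, htC _ hqt⟩
  simp only [smul_eq_mul] at hps hqs
  rwa [hps, hqs] at key

theorem IsPosDefFn.integralForm_nonneg (hpd : IsPosDefFn g) (hg : Continuous g)
    {μ : Measure H} [IsFiniteMeasure μ] {C : Set H} (hC : IsCompact C) (hμC : ∀ᵐ x ∂μ, x ∈ C)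
    {h : H → ℂ} (hh : AEStronglyMeasurable h μ) {M : ℝ} (hM : ∀ u, ‖h u‖ ≤ M) :
    0 ≤ integralForm μ h g := by
  have hM0 : 0 ≤ M := (norm_nonneg _).trans (hM 1)
  have hhi : Integrable h μ := Integrable.of_bound hh M (ae_of_all _ hM)
  have hconj : Integrable (fun x => conj (h x)) μ :=
    Complex.conjCLE.toContinuousLinearMap.integrable_comp hhi
  refine (isClosed_Ici (a := (0 : ℂ))).closure_subset
    (Metric.mem_closure_iff.2 fun ε hε => ?_)
  obtain ⟨δ, hδ, hδε⟩ := exists_pos_mul_lt hε (M * M * μ.real univ * μ.real univ)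
  obtain ⟨π, hπ⟩ := hg.exists_simpleFunc_norm_sub_lt hC hδ
  refine ⟨_, hpd.integral_integral_simpleFunc_nonneg hhi π, ?_⟩
  have hdisc : ∀ p, Integrable (fun q => g ((π p)⁻¹ * π q) * h p * conj (h q)) μ := fun p =>
    π.integrable_comp_mul (fun b => g ((π p)⁻¹ * b) * h p) hconj
  have hdisc' : Integrable (fun p => ∫ q, g ((π p)⁻¹ * π q) * h p * conj (h q) ∂μ) μ := by
    simp only [mul_right_comm _ (h _), integral_mul_const]
    exact π.integrable_comp_mul (fun a => ∫ q, g (a⁻¹ * π q) * conj (h q) ∂μ) hhi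
  rw [dist_eq_norm, integralForm]
  refine (norm_integral_integral_sub_le (hg.integrable_mul_mul_conj hC hμC hh hM) hdisc
    (hg.integrable_integral_mul_mul_conj hC hμC hh hM) hdisc' (ε := δ * M * M) ?_).trans_lt
    (lt_of_eq_of_lt (by ring) hδε)
  filter_upwards [hμC] with p hp
  filter_upwards [hμC] with q hq
  rw [← sub_mul, ← sub_mul, norm_mul, norm_mul, Complex.norm_conj]
  exact mul_le_mul (mul_le_mul (hπ p hp q hq).le (hM p) (norm_nonneg _) hδ.le) (hM q)
    (norm_nonneg _) (mul_nonneg hδ.le hM0)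

theorem IsPosDefFn.integral_nonneg [CompactSpace H] [MeasurableMul H] (ω : Measure H)
    [ω.IsMulLeftInvariant] [IsProbabilityMeasure ω] (hpd : IsPosDefFn g) (hg : Continuous g) :
    0 ≤ ∫ y, g y ∂ω := by
  have key := hpd.integralForm_nonneg hg isCompact_univ (ae_of_all ω fun _ => mem_univ _)
    (aestronglyMeasurable_const (b := (1 : ℂ))) (M := 1) (fun _ => by simp)
  have hinv : ∀ p : H, ∫ q, g (p⁻¹ * q) ∂ω = ∫ q, g q ∂ω := fun p =>
    integral_mul_left_eq_self g p⁻¹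
  simpa [integralForm, hinv] using key

theorem IsPosDefFn.integralForm_snd {G : Type*} [Group G] [TopologicalSpace G]
    {f : G × H → ℂ} (hpd : IsPosDefFn f) (hf : Continuous f) {μ : Measure H} [IsFiniteMeasure μ]
    {C : Set H} (hC : IsCompact C) (hμC : ∀ᵐ x ∂μ, x ∈ C) {h : H → ℂ}
    (hh : AEStronglyMeasurable h μ) {M : ℝ} (hM : ∀ u, ‖h u‖ ≤ M) :
    IsPosDefFn fun y => integralForm μ h fun w => f (y, w) := by
  intro n x d
  refine ((hpd.gramSum_fst x d).integralForm_nonneg (by fun_prop) hC hμC hh hM).trans_eq ?_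
  rw [integralForm_finsetSum _ (fun j _ => by fun_prop) hC hμC hh hM]
  refine Finset.sum_congr rfl fun j _ => ?_
  rw [integralForm_finsetSum _ (fun k _ => by fun_prop) hC hμC hh hM]
  refine Finset.sum_congr rfl fun k _ => ?_
  rw [integralForm_mul_const, integralForm_mul_const]

end PosDef

theorem stmt_7_general {G L : Type*} [Group G] [TopologicalSpace G] [IsTopologicalGroup G]
    [CompactSpace G] [MeasurableSpace G] [BorelSpace G]
    [Group L] [TopologicalSpace L] [IsTopologicalGroup L]
    [MeasurableSpace L] [BorelSpace L]
    (ωG : Measure G) [ωG.IsHaarMeasure] [IsProbabilityMeasure ωG]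
    (f : G × L → ℂ) (hfc : Continuous f)
    (hfpd : IsPosDefFn f) :
    ∀ (ν : Measure L), IsFiniteMeasure ν → ν.Regular →
      (∃ C : Set L, IsCompact C ∧ ν Cᶜ = 0) →
      ∀ h : L → ℂ, Measurable h → (∃ M : ℝ, ∀ u : L, ‖h u‖ ≤ M) →
        0 ≤ ∫ y : G, ∫ u : L, ∫ v : L,
              f (y, u⁻¹ * v) * h u * (starRingEnd ℂ) (h v) ∂ν ∂ν ∂ωG := by
  rintro ν hν - ⟨C, hC, hνC⟩ h hh ⟨M, hM⟩
  have hνC' : ∀ᵐ v ∂ν, v ∈ C := mem_ae_iff.2 hνC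
  exact (hfpd.integralForm_snd hfc hC hνC' hh.aestronglyMeasurable hM).integral_nonneg ωG
    (hfc.continuous_integralForm hC hνC' hh.aestronglyMeasurable hM)

/-- A compactly supported complex Radon measure `σ` on `L` is encoded as `h • ν`
with `ν` a finite regular compactly supported positive measure and `h` a bounded
measurable density; the conjugate measure is `conj h • ν`. -/
theorem stmt_7 {G L : Type*} [Group G] [TopologicalSpace G] [IsTopologicalGroup G]
    [CompactSpace G] [MeasurableSpace G] [BorelSpace G]
    [Group L] [TopologicalSpace L] [IsTopologicalGroup L] [LocallyCompactSpace L]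
    [MeasurableSpace L] [BorelSpace L]
    (ωG : Measure G) [ωG.IsHaarMeasure] [IsProbabilityMeasure ωG]
    (f : G × L → ℂ) (hfc : Continuous f)
    (hfpd : IsPosDefFn f) :
    ∀ (ν : Measure L), IsFiniteMeasure ν → ν.Regular →
      (∃ C : Set L, IsCompact C ∧ ν Cᶜ = 0) →
      ∀ h : L → ℂ, Measurable h → (∃ M : ℝ, ∀ u : L, ‖h u‖ ≤ M) →
        0 ≤ ∫ y : G, ∫ u : L, ∫ v : L,
              f (y, u⁻¹ * v) * h u * (starRingEnd ℂ) (h v) ∂ν ∂ν ∂ωG :=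
  stmt_7_general ωG f hfc hfpd
end

section
/- Let X be a nonempty set, Z a countable index set, G a compact group, (φ_z)_{z∈Z} a family of continuous positive definite functions on G with φ_z(e_G) = 1, and for each z a positive definite kernel B_z : X² → ℂ such that ∑_{z∈Z} B_z(u,u) < ∞ for all u ∈ X. Then f(x, u, v) := ∑_{z∈Z} B_z(u,v) φ_z(x) converges absolutely for every (x,u,v), and the kernel ((x,u),(y,v)) ↦ f(x⁻¹y, u, v) on (G × X)² is positive definite. -/
open ComplexOrder

/-- A kernel `B : X → X → ℂ` is positive definite. -/
def IsPosDefKernel {X : Type*} (B : X → X → ℂ) : Prop :=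
  ∀ (n : ℕ) (u : Fin n → X) (c : Fin n → ℂ),
    0 ≤ ∑ j, ∑ k, B (u j) (u k) * c j * (starRingEnd ℂ) (c k)

/-! Each summand `B z u v * φ z (x⁻¹ * y)` is the entrywise (Schur) product of two positive
definite kernels on `G × X`, hence positive definite, and nonnegativity of the quadratic forms
passes to the convergent sum. Convergence comes from the `2 × 2` minors:
`|B z u v|² ≤ B z u u * B z v v` gives `|B z u v| ≤ B z u u + B z v v`, and `|φ z x| ≤ φ z 1 = 1`. -/

open Matrix

namespace Matrix

lemma dotProduct_mulVec_star_eq_sum {n : Type*} [Fintype n] (M : Matrix n n ℂ) (c : n → ℂ) :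
    c ⬝ᵥ (M *ᵥ star c) = ∑ j, ∑ k, M j k * c j * starRingEnd ℂ (c k) := by
  simp only [dotProduct, mulVec, Finset.mul_sum, Pi.star_apply, Complex.star_def]
  exact Finset.sum_congr rfl fun j _ => Finset.sum_congr rfl fun k _ => by ring

/-- Over `ℂ` a nonnegative quadratic form is automatically Hermitian. -/
lemma posSemidef_of_forall_dotProduct_mulVec_nonneg {n : Type*} [Fintype n] {A : Matrix n n ℂ}
    (h : ∀ x, 0 ≤ star x ⬝ᵥ (A *ᵥ x)) : A.PosSemidef := by
  classical
  rw [← isPositive_toEuclideanLin_iff, LinearMap.isPositive_iff_complex]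
  intro x
  have hx := h (WithLp.ofLp x)
  simp only [EuclideanSpace.inner_eq_star_dotProduct, toLpLin_apply, dotProduct_star,
    dotProduct_comm (A *ᵥ _), (IsSelfAdjoint.of_nonneg hx).star_eq]
  exact ⟨(Complex.eq_re_of_ofReal_le (r := 0) (by rwa [Complex.ofReal_zero])).symm,
    (Complex.nonneg_iff.1 hx).1⟩

lemma PosSemidef.norm_sq_apply_le {A : Matrix (Fin 2) (Fin 2) ℂ} (hA : A.PosSemidef) :
    ‖A 0 1‖ ^ 2 ≤ ‖A 0 0‖ * ‖A 1 1‖ := by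
  have hdet : (0 : ℂ) ≤ A 0 0 * A 1 1 - A 0 1 * starRingEnd ℂ (A 0 1) := by
    simpa [det_fin_two, ← hA.isHermitian.apply 0 1] using hA.det_nonneg
  have h_diag (i : Fin 2) : A i i = (‖A i i‖ : ℂ) := by
    rw [← Complex.re_eq_norm.2 hA.diag_nonneg]
    exact Complex.eq_re_of_ofReal_le (r := 0) (by rw [Complex.ofReal_zero]; exact hA.diag_nonneg)
  rw [Complex.mul_conj, Complex.normSq_eq_norm_sq, h_diag 0, h_diag 1] at hdet
  exact_mod_cast sub_nonneg.1 hdet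

end Matrix

section Kernel

variable {X Y : Type*} {B C : X → X → ℂ}

lemma isPosDefKernel_iff_posSemidef :
    IsPosDefKernel B ↔ ∀ n (u : Fin n → X), (of fun j k => B (u j) (u k)).PosSemidef := by
  refine ⟨fun hB n u => posSemidef_of_forall_dotProduct_mulVec_nonneg fun x => ?_,
    fun h n u c => ?_⟩
  · have h_eq := dotProduct_mulVec_star_eq_sum (of fun j k => B (u j) (u k)) (star x)
    rw [star_star] at h_eq
    rw [h_eq]
    exact hB n u (star x)
  · have h_nonneg := (h n u).dotProduct_mulVec_nonneg (star c)
    rwa [star_star, dotProduct_mulVec_star_eq_sum] at h_nonneg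

lemma IsPosDefKernel.comp (hB : IsPosDefKernel B) (f : Y → X) :
    IsPosDefKernel fun p q => B (f p) (f q) :=
  fun n u => hB n (f ∘ u)

lemma IsPosDefKernel.mul (hB : IsPosDefKernel B) (hC : IsPosDefKernel C) :
    IsPosDefKernel fun u v => B u v * C u v :=
  isPosDefKernel_iff_posSemidef.2 fun n u =>
    (isPosDefKernel_iff_posSemidef.1 hB n u).hadamard (isPosDefKernel_iff_posSemidef.1 hC n u)

lemma IsPosDefKernel.tsum {ι : Type*} {B : ι → X → X → ℂ} (hB : ∀ i, IsPosDefKernel (B i))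
    (hs : ∀ u v, Summable fun i => B i u v) :
    IsPosDefKernel fun u v => ∑' i, B i u v := by
  intro n u c
  have h_hasSum : HasSum (fun i => ∑ j, ∑ k, B i (u j) (u k) * c j * starRingEnd ℂ (c k))
      (∑ j, ∑ k, (∑' i, B i (u j) (u k)) * c j * starRingEnd ℂ (c k)) :=
    hasSum_sum fun j _ => hasSum_sum fun k _ => ((hs _ _).hasSum.mul_right _).mul_right _
  exact h_hasSum.nonneg fun i => hB i n u c

lemma IsPosDefKernel.norm_sq_le (hB : IsPosDefKernel B) (u v : X) :
    ‖B u v‖ ^ 2 ≤ ‖B u u‖ * ‖B v v‖ :=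
  (isPosDefKernel_iff_posSemidef.1 hB 2 ![u, v]).norm_sq_apply_le

lemma IsPosDefKernel.norm_le_add (hB : IsPosDefKernel B) (u v : X) :
    ‖B u v‖ ≤ ‖B u u‖ + ‖B v v‖ := by
  nlinarith [hB.norm_sq_le u v, norm_nonneg (B u u), norm_nonneg (B v v), norm_nonneg (B u v)]

lemma IsPosDefKernel.summable_norm {ι : Type*} {B : ι → X → X → ℂ}
    (hB : ∀ i, IsPosDefKernel (B i)) (hs : ∀ u, Summable fun i => ‖B i u u‖) (u v : X) :
    Summable fun i => ‖B i u v‖ :=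
  ((hs u).add (hs v)).of_nonneg_of_le (fun _ => norm_nonneg _) fun i => (hB i).norm_le_add u v

end Kernel

namespace IsPosDefFn

variable {G : Type*} [Group G] {f : G → ℂ}

lemma isPosDefKernel (hf : IsPosDefFn f) : IsPosDefKernel fun x y => f (x⁻¹ * y) := hf

lemma norm_le (hf : IsPosDefFn f) (x : G) : ‖f x‖ ≤ ‖f 1‖ := by
  have h := hf.isPosDefKernel.norm_sq_le 1 x
  simp only [inv_one, one_mul, inv_mul_cancel] at h
  exact (pow_le_pow_iff_left₀ (norm_nonneg _) (norm_nonneg _) two_ne_zero).1 (by nlinarith)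

end IsPosDefFn

theorem stmt_16_general {X Z G : Type*} [Group G]
    (φ : Z → G → ℂ) (hφpd : ∀ z, IsPosDefFn (φ z))
    (hφ1 : ∀ z, φ z 1 = 1)
    (B : Z → X → X → ℂ) (hB : ∀ z, IsPosDefKernel (B z))
    (hsum : ∀ u : X, Summable fun z => ‖B z u u‖) :
    (∀ (x : G) (u v : X), Summable fun z => ‖B z u v * φ z x‖) ∧
    IsPosDefKernel (fun p q : G × X =>
      ∑' z, B z p.2 q.2 * φ z (p.1⁻¹ * q.1)) := by
  have hφ_le : ∀ z x, ‖φ z x‖ ≤ 1 := fun z x => by simpa [hφ1] using (hφpd z).norm_le x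
  have hS : ∀ (x : G) (u v : X), Summable fun z => ‖B z u v * φ z x‖ := fun x u v =>
    (IsPosDefKernel.summable_norm hB hsum u v).of_nonneg_of_le (fun _ => norm_nonneg _)
      fun z => by
        rw [norm_mul]
        exact mul_le_of_le_one_right (norm_nonneg _) (hφ_le z x)
  refine ⟨hS, IsPosDefKernel.tsum (fun z => ?_) fun p q => (hS _ _ _).of_norm⟩
  exact ((hB z).comp Prod.snd).mul ((hφpd z).isPosDefKernel.comp Prod.fst)

theorem stmt_16 {X Z G : Type*} [Nonempty X] [Countable Z]
    [Group G] [TopologicalSpace G] [IsTopologicalGroup G] [CompactSpace G]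
    (φ : Z → G → ℂ) (hφc : ∀ z, Continuous (φ z)) (hφpd : ∀ z, IsPosDefFn (φ z))
    (hφ1 : ∀ z, φ z 1 = 1)
    (B : Z → X → X → ℂ) (hB : ∀ z, IsPosDefKernel (B z))
    (hsum : ∀ u : X, Summable fun z => ‖B z u u‖) :
    (∀ (x : G) (u v : X), Summable fun z => ‖B z u v * φ z x‖) ∧
    IsPosDefKernel (fun p q : G × X =>
      ∑' z, B z p.2 q.2 * φ z (p.1⁻¹ * q.1)) :=
  stmt_16_general φ hφpd hφ1 B hB hsum
end
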